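/- Let h > 0, let F ∈ L²([−π/h, π/h]), and let f(z) = (1/2π) ∫_{−π/h}^{π/h} F(t) e^{−izt} dt. Let (z_j)_{j≥1} be a sequence of distinct points of ℂ such that for every n the Gram matrix A_n with entries a_{j,k} = sin((π/h)(z_j − z̄_k))/(π(z_j − z̄_k)) (1 ≤ j, k ≤ n) is positive definite, and such that (z_j) is a uniqueness set of W(π/h), i.e. every g ∈ W(π/h) with g(z_j) = 0 for all j ≥ 1 is identically zero. Then the functions f*_{A_n}(z) = Σ_{j=1}^n Σ_{k=1}^n f(z_j) ã_{j,k} K_h(z, z̄_k), where ã_{j,k} are the entries of the conjugate of A_n^{-1} and K_h(z, w̄) = sin((π/h)(z − w̄))/(π(z − w̄)), converge to f in the L²(ℝ) norm as n → ∞. -/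

import Mathlib

open MeasureTheory
open scoped ComplexOrder

/-- The Paley–Wiener transform at band-width `π/h`:
`f(z) = (1/2π) ∫_{−π/h}^{π/h} F(t) e^{−izt} dt`. -/
noncomputable def pwTransformH (h : ℝ) (F : ℝ → ℂ) (z : ℂ) : ℂ :=
  (1 / (2 * Real.pi) : ℝ) •
    ∫ t in Set.Icc (-(Real.pi / h)) (Real.pi / h), F t * Complex.exp (-Complex.I * z * t)

/-- The Paley–Wiener reproducing kernel `K_h(z, w̄) = sin((π/h)(z − w̄))/(π(z − w̄))` as a
function of `u = z − w̄`, with the removable singularity at `u = 0` given its limit value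
`1/h`. -/
noncomputable def sincKernel (h : ℝ) (u : ℂ) : ℂ :=
  if u = 0 then (1 / h : ℝ) else Complex.sin ((Real.pi / h : ℝ) * u) / ((Real.pi : ℂ) * u)

/-!
Let `μ_h` be `(2π)⁻¹` times Lebesgue measure on `[-π/h, π/h]` and `e_w(t) = exp(i w̄ t)`. In
`L²(μ_h)` one has `f(w) = ⟪e_w, F⟫` and `⟪e_v, e_w⟫ = K_h(v, w̄)`, so `A_n` is the Gram matrix of
`e_{z_1}, …, e_{z_n}` and `f*_{A_n}(x) = ⟪e_x, P_n F⟫`, where `P_n` is the orthogonal projection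
onto their span. By Parseval's identity for Fourier series on `[-π/h, π/h]`, no nonzero `u` is
orthogonal to every `e_w`, so the uniqueness hypothesis says that the `e_{z_j}` span a dense
subspace, hence `P_n F → F`. It remains to bound `x ↦ ⟪e_x, u⟫` in `L²(ℝ)` by `‖u‖`: the vectors `√h e_{x + mh}`,
`m ∈ ℤ`, are orthonormal, so by Bessel's inequality `∑_m |⟪e_{x+mh}, u⟫|² ≤ ‖u‖² / h`, and
integrating over `x ∈ (0, h]` gives the bound.
-/

open Submodule Matrix Set Filter
open scoped InnerProductSpace ComplexConjugate Topology

section GramProjection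

variable {𝕜 E ι : Type*} [RCLike 𝕜] [NormedAddCommGroup E] [InnerProductSpace 𝕜 E]

instance Submodule.hasOrthogonalProjection_span_range [Finite ι] (v : ι → E) :
    (span 𝕜 (range v)).HasOrthogonalProjection :=
  have := FiniteDimensional.span_of_finite 𝕜 (finite_range v)
  have := FiniteDimensional.complete 𝕜 (span 𝕜 (range v))
  inferInstance

theorem tendsto_starProjection_span_range_fin [CompleteSpace E] {v : ℕ → E}
    (hv : (span 𝕜 (range v))ᗮ = ⊥) (x : E) :
    Tendsto (fun n => (span 𝕜 (range fun k : Fin n => v k)).starProjection x) atTop (𝓝 x) := by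
  refine starProjection_tendsto_self _
    (fun m n hmn => span_mono (range_subset_iff.mpr fun k => ⟨Fin.castLE hmn k, rfl⟩)) x ?_
  rw [← topologicalClosure_eq_top_iff.mpr hv]
  refine topologicalClosure_mono (span_le.mpr (range_subset_iff.mpr fun j => ?_))
  exact mem_iSup_of_mem (j + 1) (subset_span ⟨⟨j, j.lt_succ_self⟩, rfl⟩)

variable [Fintype ι] [DecidableEq ι]

theorem starProjection_span_range_eq_sum_gram_inv {v : ι → E} (hv : IsUnit (gram 𝕜 v))
    (x : E) :
    (span 𝕜 (range v)).starProjection x =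
      ∑ k, ((gram 𝕜 v)⁻¹ *ᵥ fun j => ⟪v j, x⟫_𝕜) k • v k := by
  set c := (gram 𝕜 v)⁻¹ *ᵥ fun j => ⟪v j, x⟫_𝕜
  have hc : gram 𝕜 v *ᵥ c = fun j => ⟪v j, x⟫_𝕜 := by
    rw [mulVec_mulVec, mul_nonsing_inv _ ((isUnit_iff_isUnit_det _).mp hv), one_mulVec]
  refine eq_starProjection_of_mem_of_inner_eq_zero
    (sum_mem fun k _ => smul_mem _ _ (subset_span ⟨k, rfl⟩)) fun w hw => ?_
  suffices span 𝕜 (range v) ≤ (𝕜 ∙ (x - ∑ k, c k • v k))ᗮ from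
    mem_orthogonal_singleton_iff_inner_right.mp (this hw)
  refine span_le.mpr (range_subset_iff.mpr fun m => ?_)
  rw [SetLike.mem_coe, mem_orthogonal_singleton_iff_inner_right, inner_eq_zero_symm,
    inner_sub_right, inner_sum]
  have := congrFun hc m
  simp only [mulVec, dotProduct, gram_apply] at this
  simp only [inner_smul_right, mul_comm (c _), this, sub_self]

theorem inner_starProjection_span_range {v : ι → E} (hv : IsUnit (gram 𝕜 v)) (x y : E) :
    ⟪y, (span 𝕜 (range v)).starProjection x⟫_𝕜 =
      ∑ j, ∑ k, ⟪v j, x⟫_𝕜 * conj ((gram 𝕜 v)⁻¹ j k) * ⟪y, v k⟫_𝕜 := by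
  have hinv : ∀ j k, conj ((gram 𝕜 v)⁻¹ j k) = (gram 𝕜 v)⁻¹ k j := fun j k =>
    congrFun (congrFun (isHermitian_gram 𝕜 v).inv k) j
  simp_rw [starProjection_span_range_eq_sum_gram_inv hv, inner_sum, inner_smul_right, hinv,
    mulVec, dotProduct, Finset.sum_mul]
  rw [Finset.sum_comm]
  exact Finset.sum_congr rfl fun _ _ => Finset.sum_congr rfl fun _ _ => by ring

end GramProjection

namespace PaleyWiener

open Complex
open scoped ENNReal

variable {h : ℝ}

noncomputable def measure (h : ℝ) : Measure ℝ :=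
  ENNReal.ofReal (2 * Real.pi)⁻¹ • volume.restrict (Icc (-(Real.pi / h)) (Real.pi / h))

instance (h : ℝ) : IsFiniteMeasure (measure h) :=
  ⟨by
    rw [measure, Measure.smul_apply, Measure.restrict_apply_univ, smul_eq_mul]
    exact ENNReal.mul_lt_top ENNReal.ofReal_lt_top measure_Icc_lt_top⟩

lemma memLp_measure_iff {G : ℝ → ℂ} :
    MemLp G 2 (measure h) ↔ MemLp G 2 (volume.restrict (Icc (-(Real.pi / h)) (Real.pi / h))) := by
  have hc : ENNReal.ofReal (2 * Real.pi)⁻¹ ≠ 0 := by simp [Real.pi_pos]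
  refine ⟨fun hG => hG.of_measure_le_smul (c := (ENNReal.ofReal (2 * Real.pi)⁻¹)⁻¹)
    (by simpa using hc) ?_, fun hG => hG.smul_measure ENNReal.ofReal_ne_top⟩
  rw [measure, smul_smul, ENNReal.inv_mul_cancel hc ENNReal.ofReal_ne_top, one_smul]

lemma integral_measure (G : ℝ → ℂ) :
    ∫ t, G t ∂measure h =
      (1 / (2 * Real.pi) : ℝ) • ∫ t in Icc (-(Real.pi / h)) (Real.pi / h), G t := by
  rw [measure, integral_smul_measure, ENNReal.toReal_ofReal (by positivity), one_div]

noncomputable def expConj (w : ℂ) (t : ℝ) : ℂ := cexp (I * conj w * t)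

lemma continuous_expConj (w : ℂ) : Continuous (expConj w) := by
  unfold expConj; fun_prop

lemma memLp_expConj (h : ℝ) (w : ℂ) : MemLp (expConj w) 2 (measure h) := by
  obtain ⟨C, hC⟩ := isCompact_Icc.exists_bound_of_continuousOn
    (continuous_expConj w).continuousOn (s := Icc (-(Real.pi / h)) (Real.pi / h))
  refine (memLp_top_of_bound (continuous_expConj w).aestronglyMeasurable C ?_).mono_exponent le_top
  exact Measure.ae_smul_measure ((ae_restrict_mem measurableSet_Icc).mono hC) _

noncomputable def kernel (h : ℝ) (w : ℂ) : Lp ℂ 2 (measure h) := (memLp_expConj h w).toLp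

lemma inner_kernel_toLp {G : ℝ → ℂ} (hG : MemLp G 2 (measure h)) (w : ℂ) :
    ⟪kernel h w, hG.toLp G⟫_ℂ = pwTransformH h G w := by
  rw [MeasureTheory.L2.inner_def, pwTransformH, ← integral_measure]
  refine integral_congr_ae ?_
  filter_upwards [(memLp_expConj h w).coeFn_toLp, hG.coeFn_toLp] with t hk hGt
  simp [kernel, hk, hGt, expConj, ← exp_conj, mul_comm]

lemma inner_kernel (u : Lp ℂ 2 (measure h)) (w : ℂ) :
    ⟪kernel h w, u⟫_ℂ = pwTransformH h u w := by
  simpa using inner_kernel_toLp (Lp.memLp u) w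

lemma integral_cexp_mul_eq_sincKernel (hh : 0 < h) (d : ℂ) :
    ∫ t in Icc (-(Real.pi / h)) (Real.pi / h), cexp (-I * d * t) =
      2 * Real.pi * sincKernel h d := by
  have hle : -(Real.pi / h) ≤ Real.pi / h := by linarith [div_pos Real.pi_pos hh]
  rw [integral_Icc_eq_integral_Ioc, ← intervalIntegral.integral_of_le hle]
  by_cases hd : d = 0
  · simp [hd, sincKernel, field, one_add_one_eq_two]
  rw [integral_exp_mul_complex (by simp [hd]), sincKernel, if_neg hd]
  set p : ℂ := (Real.pi / h : ℝ) * d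
  have hsin := two_sin (x := p)
  have hπ : (Real.pi : ℂ) ≠ 0 := by exact_mod_cast Real.pi_ne_zero
  rw [show -I * d * ((Real.pi / h : ℝ) : ℂ) = -p * I by simp only [p]; ring,
    show -I * d * ((-(Real.pi / h) : ℝ) : ℂ) = p * I by simp only [p]; push_cast; ring]
  field_simp
  rw [neg_mul] at hsin
  linear_combination (-I) * hsin - (cexp (-(p * I)) - cexp (p * I)) * I_sq

lemma inner_kernel_kernel (hh : 0 < h) (v w : ℂ) :
    ⟪kernel h v, kernel h w⟫_ℂ = sincKernel h (v - conj w) := by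
  refine (inner_kernel_toLp (memLp_expConj h w) v).trans ?_
  rw [pwTransformH]
  have hπ : (Real.pi : ℂ) ≠ 0 := by exact_mod_cast Real.pi_ne_zero
  simp_rw [expConj, ← Complex.exp_add, show ∀ t : ℝ, I * conj w * t + -I * v * t =
    -I * (v - conj w) * t from fun t => by ring, integral_cexp_mul_eq_sincKernel hh]
  rw [Complex.real_smul]
  push_cast
  field_simp

lemma sincKernel_intCast_mul (hh : 0 < h) (m : ℤ) :
    sincKernel h (m * h) = if m = 0 then ((1 / h : ℝ) : ℂ) else 0 := by
  split_ifs with hm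
  · simp [sincKernel, hm]
  have hmh : (m * h : ℂ) ≠ 0 := by exact_mod_cast mul_ne_zero (Int.cast_ne_zero.mpr hm) hh.ne'
  rw [sincKernel, if_neg hmh, show ((Real.pi / h : ℝ) : ℂ) * (m * h) = m * Real.pi by
    push_cast; field_simp, sin_int_mul_pi, zero_div]

lemma orthonormal_kernel_translate (hh : 0 < h) (x : ℝ) :
    Orthonormal ℂ fun g : AddSubgroup.zmultiples h =>
      (Real.sqrt h : ℂ) • kernel h ((g + x : ℝ) : ℂ) := by
  rw [orthonormal_iff_ite]
  rintro ⟨g, m, rfl⟩ ⟨g', m', rfl⟩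
  rw [inner_smul_left, inner_smul_right, inner_kernel_kernel hh, conj_ofReal, ← mul_assoc,
    ← ofReal_mul, Real.mul_self_sqrt hh.le, conj_ofReal]
  have : (((m • h : ℝ) + x : ℝ) : ℂ) - ((m' • h + x : ℝ) : ℂ) = ((m - m' : ℤ) : ℂ) * h := by
    push_cast; ring
  rw [this, sincKernel_intCast_mul hh]
  by_cases hmm : m = m' <;> simp [hmm, hh.ne', sub_eq_zero]

lemma continuous_pwTransformH_ofReal {G : ℝ → ℂ}
    (hG : IntegrableOn G (Icc (-(Real.pi / h)) (Real.pi / h))) :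
    Continuous fun x : ℝ => pwTransformH h G x := by
  unfold pwTransformH
  refine (continuous_const (y := (1 / (2 * Real.pi) : ℝ))).smul (continuous_of_dominated
    (F := fun (x t : ℝ) => G t * cexp (-I * x * t)) (bound := fun t => ‖G t‖) ?_ ?_ hG.norm ?_)
  · exact fun x => hG.aestronglyMeasurable.mul (by fun_prop : Continuous _).aestronglyMeasurable
  · refine fun x => Eventually.of_forall fun t => ?_
    rw [norm_mul, show -I * x * t = ((-(x * t) : ℝ) : ℂ) * I by push_cast; ring,
      norm_exp_ofReal_mul_I, mul_one]
  · exact Eventually.of_forall fun t => by fun_prop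

lemma continuous_inner_kernel (u : Lp ℂ 2 (measure h)) :
    Continuous fun x : ℝ => ⟪kernel h x, u⟫_ℂ := by
  simp_rw [inner_kernel]
  exact continuous_pwTransformH_ofReal
    ((memLp_measure_iff.mp (Lp.memLp u)).integrable one_le_two)

lemma tsum_enorm_inner_kernel_translate_sq_le (hh : 0 < h) (u : Lp ℂ 2 (measure h)) (x : ℝ) :
    ∑' g : AddSubgroup.zmultiples h, ‖⟪kernel h ((g + x : ℝ) : ℂ), u⟫_ℂ‖ₑ ^ 2 ≤
      ‖u‖ₑ ^ 2 / ENNReal.ofReal h := by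
  have hon := orthonormal_kernel_translate hh x
  rw [ENNReal.le_div_iff_mul_le (by simp [hh]) (by simp), mul_comm, ← ENNReal.tsum_mul_left]
  calc ∑' g : AddSubgroup.zmultiples h, ENNReal.ofReal h * ‖⟪kernel h ((g + x : ℝ) : ℂ), u⟫_ℂ‖ₑ ^ 2
      = ∑' g : AddSubgroup.zmultiples h,
          ENNReal.ofReal (‖⟪(Real.sqrt h : ℂ) • kernel h ((g + x : ℝ) : ℂ), u⟫_ℂ‖ ^ 2) := by
        refine tsum_congr fun g => ?_
        rw [inner_smul_left, norm_mul, RCLike.norm_conj, norm_real, Real.norm_eq_abs,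
          abs_of_nonneg (Real.sqrt_nonneg h), mul_pow, Real.sq_sqrt hh.le,
          ENNReal.ofReal_mul hh.le, ENNReal.ofReal_pow (norm_nonneg _), ofReal_norm]
    _ = ENNReal.ofReal (∑' g : AddSubgroup.zmultiples h,
          ‖⟪(Real.sqrt h : ℂ) • kernel h ((g + x : ℝ) : ℂ), u⟫_ℂ‖ ^ 2) :=
        (ENNReal.ofReal_tsum_of_nonneg (fun _ => by positivity)
          (hon.inner_products_summable u)).symm
    _ ≤ ENNReal.ofReal (‖u‖ ^ 2) := ENNReal.ofReal_le_ofReal (hon.tsum_inner_products_le u)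
    _ = ‖u‖ₑ ^ 2 := by rw [ENNReal.ofReal_pow (norm_nonneg _), ofReal_norm]

lemma lintegral_enorm_inner_kernel_sq_le (hh : 0 < h) (u : Lp ℂ 2 (measure h)) :
    ∫⁻ x : ℝ, ‖⟪kernel h x, u⟫_ℂ‖ₑ ^ 2 ≤ ‖u‖ₑ ^ 2 := by
  have hmeas : Measurable fun x : ℝ => ‖⟪kernel h x, u⟫_ℂ‖ₑ ^ 2 :=
    (continuous_inner_kernel u).measurable.enorm.pow_const 2
  rw [(isAddFundamentalDomain_Ioc hh 0 volume).lintegral_eq_tsum'']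
  calc ∑' g : AddSubgroup.zmultiples h, ∫⁻ x in Ioc 0 (0 + h), ‖⟪kernel h ↑(g +ᵥ x), u⟫_ℂ‖ₑ ^ 2
      = ∫⁻ x in Ioc 0 (0 + h), ∑' g : AddSubgroup.zmultiples h,
          ‖⟪kernel h ((g + x : ℝ) : ℂ), u⟫_ℂ‖ₑ ^ 2 :=
        (lintegral_tsum fun g => (hmeas.comp (measurable_const_add _)).aemeasurable).symm
    _ ≤ ∫⁻ x in Ioc 0 (0 + h), ‖u‖ₑ ^ 2 / ENNReal.ofReal h :=
        lintegral_mono fun x => tsum_enorm_inner_kernel_translate_sq_le hh u x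
    _ = ‖u‖ₑ ^ 2 := by
        rw [setLIntegral_const, Real.volume_Ioc, zero_add, sub_zero,
          ENNReal.div_mul_cancel (by simp [hh]) (by simp)]

lemma eLpNorm_inner_kernel_le (hh : 0 < h) (u : Lp ℂ 2 (measure h)) :
    eLpNorm (fun x : ℝ => ⟪kernel h x, u⟫_ℂ) 2 volume ≤ ‖u‖ₑ := by
  have hsq := eLpNorm_nnreal_pow_eq_lintegral (f := fun x : ℝ => ⟪kernel h x, u⟫_ℂ)
    (μ := volume) (p := 2) two_ne_zero
  simp only [ENNReal.coe_ofNat, NNReal.coe_ofNat, ENNReal.rpow_ofNat] at hsq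
  exact (ENNReal.pow_le_pow_left_iff two_ne_zero).mp (hsq ▸ lintegral_enorm_inner_kernel_sq_le hh u)

lemma eq_zero_of_inner_kernel_intCast_mul_eq_zero (hh : 0 < h) (u : Lp ℂ 2 (measure h))
    (hu : ∀ m : ℤ, ⟪kernel h (m * h), u⟫_ℂ = 0) : u = 0 := by
  set a := Real.pi / h
  have ha : 0 < a := div_pos Real.pi_pos hh
  have hab : -a < a := by linarith
  have hIcc := memLp_measure_iff.mp (Lp.memLp u)
  have hL2 : MemLp u 2 (volume.restrict (Ioc (-a) a)) :=
    hIcc.mono_measure (Measure.restrict_mono Ioc_subset_Icc_self le_rfl)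
  -- `⟪kernel h (m * h), u⟫` is a multiple of the `m`-th Fourier coefficient of `u` on `[-a, a]`.
  have hcoeff : ∀ m, fourierCoeffOn hab u m = 0 := by
    intro m
    have hm := hu m
    rw [inner_kernel, pwTransformH, smul_eq_zero] at hm
    have hint : ∫ t in Icc (-a) a, fourier (-m) (t : AddCircle (a - -a)) • (u : ℝ → ℂ) t =
        ∫ t in Icc (-a) a, u t * cexp (-I * (m * h) * t) := by
      refine integral_congr_ae (Eventually.of_forall fun t => ?_)
      have hπ : (Real.pi : ℂ) ≠ 0 := by exact_mod_cast Real.pi_ne_zero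
      have hh' : (h : ℂ) ≠ 0 := by exact_mod_cast hh.ne'
      simp only [fourier_coe_apply, smul_eq_mul, a]
      rw [mul_comm]
      congr 2
      push_cast
      field_simp
      ring
    rw [fourierCoeffOn_eq_integral, intervalIntegral.integral_of_le hab.le,
      ← integral_Icc_eq_integral_Ioc, hint, hm.resolve_left (by positivity), smul_zero]
  have hsum := hasSum_sq_fourierCoeffOn hab hL2
  simp only [hcoeff, norm_zero, ne_eq, OfNat.ofNat_ne_zero, not_false_eq_true, zero_pow] at hsum
  have hint : ∫ x in Ioc (-a) a, ‖u x‖ ^ 2 = 0 := by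
    have := hasSum_zero.unique hsum
    rwa [eq_comm, smul_eq_zero, intervalIntegral.integral_of_le hab.le,
      or_iff_right (by simp [ha.ne'])] at this
  have hIoc := (integral_eq_zero_iff_of_nonneg (fun x => by positivity)
    (hL2.integrable_norm_pow two_ne_zero)).mp hint
  have hIcc : (u : ℝ → ℂ) =ᵐ[volume.restrict (Icc (-a) a)] 0 := by
    rw [← Measure.restrict_congr_set Ioc_ae_eq_Icc]
    filter_upwards [hIoc] with x hx
    simpa using hx
  exact Lp.eq_zero_iff_ae_eq_zero.mpr (Measure.ae_smul_measure hIcc _)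

lemma orthogonal_span_range_kernel_eq_bot (hh : 0 < h) {ι : Type*} {z : ι → ℂ}
    (huniq : ∀ G : ℝ → ℂ, MemLp G 2 (volume.restrict (Icc (-(Real.pi / h)) (Real.pi / h))) →
      (∀ j, pwTransformH h G (z j) = 0) → ∀ w : ℂ, pwTransformH h G w = 0) :
    (span ℂ (range fun j => kernel h (z j)))ᗮ = ⊥ := by
  refine eq_bot_iff.mpr fun u hu => eq_zero_of_inner_kernel_intCast_mul_eq_zero hh u fun m => ?_
  have hz : ∀ j, pwTransformH h u (z j) = 0 := fun j => by
    rw [← inner_kernel]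
    exact inner_right_of_mem_orthogonal (subset_span (mem_range_self j)) hu
  rw [inner_kernel]
  exact huniq u (memLp_measure_iff.mp (Lp.memLp u)) hz _

end PaleyWiener

open PaleyWiener

theorem stmt16_general (h : ℝ) (hh : 0 < h) (F : ℝ → ℂ)
    (hF : MemLp F 2 (volume.restrict (Set.Icc (-(Real.pi / h)) (Real.pi / h))))
    (z : ℕ → ℂ)
    (A : (n : ℕ) → Matrix (Fin n) (Fin n) ℂ)
    (hA : ∀ n (j k : Fin n), A n j k = sincKernel h (z j - (starRingEnd ℂ) (z k)))
    (hpos : ∀ n, (A n).PosDef)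
    (huniq : ∀ G : ℝ → ℂ,
      MemLp G 2 (volume.restrict (Set.Icc (-(Real.pi / h)) (Real.pi / h))) →
      (∀ j, pwTransformH h G (z j) = 0) → ∀ w : ℂ, pwTransformH h G w = 0) :
    Filter.Tendsto
      (fun n : ℕ => eLpNorm (fun x : ℝ =>
        pwTransformH h F x - ∑ j : Fin n, ∑ k : Fin n,
          pwTransformH h F (z j) * (starRingEnd ℂ) ((A n)⁻¹ j k) *
            sincKernel h ((x : ℂ) - (starRingEnd ℂ) (z k))) 2 volume)
      Filter.atTop (nhds 0) := by
  have hF' : MemLp F 2 (measure h) := memLp_measure_iff.mpr hF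
  set f := hF'.toLp F
  have hf : ∀ w, ⟪kernel h w, f⟫_ℂ = pwTransformH h F w := inner_kernel_toLp hF'
  set P := fun n : ℕ => (span ℂ (range fun k : Fin n => kernel h (z k))).starProjection f
  have hgram : ∀ n, gram ℂ (fun k : Fin n => kernel h (z k)) = A n := fun n => by
    ext j k
    rw [gram_apply, inner_kernel_kernel hh, hA]
  have happrox : ∀ n (x : ℝ), pwTransformH h F x - ∑ j : Fin n, ∑ k : Fin n,
      pwTransformH h F (z j) * (starRingEnd ℂ) ((A n)⁻¹ j k) *
        sincKernel h ((x : ℂ) - (starRingEnd ℂ) (z k)) = ⟪kernel h x, f - P n⟫_ℂ := fun n x => by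
    have key := inner_starProjection_span_range ((hgram n).symm ▸ (hpos n).isUnit) f (kernel h x)
    rw [hgram n] at key
    rw [inner_sub_right, key]
    simp_rw [hf, inner_kernel_kernel hh]
  have hresidual : Tendsto (fun n => ‖f - P n‖ₑ) atTop (𝓝 0) := by
    simpa using ((tendsto_const_nhds (x := f)).sub (tendsto_starProjection_span_range_fin
      (orthogonal_span_range_kernel_eq_bot hh huniq) f)).enorm
  refine tendsto_of_tendsto_of_tendsto_of_le_of_le tendsto_const_nhds hresidual
    (fun _ => zero_le) fun n => ?_
  simp_rw [happrox n]
  exact eLpNorm_inner_kernel_le hh _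

/-- **Aveiro approximation in the Paley–Wiener space `W(π/h)` over a uniqueness set
(Theorem 3.2).** Let `h > 0`, `F ∈ L²([−π/h, π/h])`, and `f = pwTransformH h F ∈ W(π/h)`.
Let `(z j)` be distinct points of `ℂ` whose Gram matrices `A n` (entries
`K_h(z j, conj (z k))`) are positive definite and which form a uniqueness set of `W(π/h)`.
Then the Aveiro approximations
`f*_{A n}(x) = ∑_{j,k} f (z j) ã_{j,k} K_h(x, conj (z k))` converge to `f` in `L²(ℝ)`. -/
theorem stmt16 (h : ℝ) (hh : 0 < h) (F : ℝ → ℂ)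
    (hF : MemLp F 2 (volume.restrict (Set.Icc (-(Real.pi / h)) (Real.pi / h))))
    (z : ℕ → ℂ) (hinj : Function.Injective z)
    (A : (n : ℕ) → Matrix (Fin n) (Fin n) ℂ)
    (hA : ∀ n (j k : Fin n), A n j k = sincKernel h (z j - (starRingEnd ℂ) (z k)))
    (hpos : ∀ n, (A n).PosDef)
    (huniq : ∀ G : ℝ → ℂ,
      MemLp G 2 (volume.restrict (Set.Icc (-(Real.pi / h)) (Real.pi / h))) →
      (∀ j, pwTransformH h G (z j) = 0) → ∀ w : ℂ, pwTransformH h G w = 0) :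
    Filter.Tendsto
      (fun n : ℕ => eLpNorm (fun x : ℝ =>
        pwTransformH h F x - ∑ j : Fin n, ∑ k : Fin n,
          pwTransformH h F (z j) * (starRingEnd ℂ) ((A n)⁻¹ j k) *
            sincKernel h ((x : ℂ) - (starRingEnd ℂ) (z k))) 2 volume)
      Filter.atTop (nhds 0) :=
  stmt16_general h hh F hF z A hA hpos huniq
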